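/- Let s be a nonempty compact convex subset of ℝⁿ (EuclideanSpace ℝ (Fin n)), let f : ℝⁿ → ℝ be convex on s and Lipschitz on s, and let ε > 0. Then there exist k ≥ 1, affine functions p₁, …, p_k : ℝⁿ → ℝ and an affine function q : ℝⁿ → ℝ such that, defining z₀(x) = 0 and z_i(x) = max(0, z_{i-1}(x) + p_i(x)) for 1 ≤ i ≤ k, one has |f x - (z_k(x) + q(x))| ≤ ε for every x ∈ s. -/

import Mathlib

/-!
A convex function that is lower semicontinuous on a closed set is the pointwise supremum of
countably many affine minorants `a₀, a₁, …`. When the function is continuous and the set compact,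
a Dini-type compactness argument shows that finitely many of them, `a₀, …, a_k`, already come
within `ε` of it uniformly. Their maximum is computed exactly by the network: with
`p_i = a_{i-1} - a_i` and `q = a_k`, the identity `max 0 (u - v) + v = max u v` makes
`z_i + a_i` the running maximum `max (a₀, …, a_i)`.
-/

/-- The ICNN recursion with one ReLU neuron per layer, unit hidden weight and affine
pass-through connections: `z₀(x) = 0` and `z_i(x) = max 0 (z_{i-1}(x) + p_i(x))` for `i ≥ 1`. -/
noncomputable def icnnSeq (n : ℕ) (p : ℕ → EuclideanSpace ℝ (Fin n) →ᵃ[ℝ] ℝ) :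
    ℕ → EuclideanSpace ℝ (Fin n) → ℝ
  | 0 => fun _ => 0
  | (i + 1) => fun x => max 0 (icnnSeq n p i x + p (i + 1) x)

theorem IsCompact.exists_forall_exists_le_lt {X α : Type*} [TopologicalSpace X]
    [TopologicalSpace α] [LinearOrder α] [OrderClosedTopology α] {s : Set X} (hs : IsCompact s)
    {f : X → α} {g : ℕ → X → α} (hf : ContinuousOn f s) (hg : ∀ i, ContinuousOn (g i) s)
    (h : ∀ x ∈ s, ∃ i, f x < g i x) : ∃ k, ∀ x ∈ s, ∃ i ≤ k, f x < g i x := by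
  choose! i hi using h
  obtain ⟨t, -, hcover⟩ := hs.elim_nhdsWithin_subcover (fun y => {x | f x < g (i y) x})
    fun y hy => (hf y hy).eventually_lt (hg (i y) y hy) (hi y hy)
  refine ⟨t.sup i, fun x hx => ?_⟩
  obtain ⟨y, hy, hxy⟩ := Set.mem_iUnion₂.mp (hcover hx)
  exact ⟨i y, Finset.le_sup hy, hxy⟩

theorem ConvexOn.exists_affine_minorants_approx {E : Type*} [TopologicalSpace E] [AddCommGroup E]
    [Module ℝ E] [IsTopologicalAddGroup E] [ContinuousSMul ℝ E] [LocallyConvexSpace ℝ E]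
    [HereditarilyLindelofSpace E] [T2Space E] {s : Set E} {f : E → ℝ} (hs : IsCompact s)
    (hf : ConvexOn ℝ s f) (hfc : ContinuousOn f s) {ε : ℝ} (hε : 0 < ε) :
    ∃ (k : ℕ) (a : ℕ → E →ᵃ[ℝ] ℝ),
      (∀ i, ∀ x ∈ s, a i x ≤ f x) ∧ ∀ x ∈ s, ∃ i ≤ k, f x - ε < a i x := by
  obtain ⟨l, c, hle, hsup⟩ := hf.real_sSup_of_nat_affine_eq hs.isClosed hfc.lowerSemicontinuousOn
  have hlt : ∀ x ∈ s, ∃ i, f x - ε < l i x + c i := by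
    intro x hx
    have hfx : ⨆ i, (l i x + c i) = f x := by simpa using congrFun hsup ⟨x, hx⟩
    exact exists_lt_of_lt_ciSup (hfx ▸ sub_lt_self _ hε)
  obtain ⟨k, hk⟩ := hs.exists_forall_exists_le_lt (hfc.sub continuousOn_const)
    (fun i => ((l i).continuous.add continuous_const).continuousOn) hlt
  exact ⟨k, fun i => (l i).toLinearMap.toAffineMap + AffineMap.const ℝ E (c i),
    fun i x hx => by simpa using hle i ⟨x, hx⟩, by simpa using hk⟩

theorem max_zero_sub_add {α : Type*} [AddCommGroup α] [LinearOrder α] [IsOrderedAddMonoid α]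
    (a b : α) : max 0 (a - b) + b = max a b := by
  rw [← max_add_add_right, zero_add, sub_add_cancel, max_comm]

theorem icnnSeq_add_eq_sup' (n : ℕ) (a : ℕ → EuclideanSpace ℝ (Fin n) →ᵃ[ℝ] ℝ) (k : ℕ)
    (x : EuclideanSpace ℝ (Fin n)) :
    icnnSeq n (fun i => a (i - 1) - a i) k x + a k x =
      (Finset.range (k + 1)).sup' Finset.nonempty_range_add_one (a · x) := by
  induction k with
  | zero => simp [icnnSeq]
  | succ k ih =>
    have hsup : (Finset.range (k + 2)).sup' Finset.nonempty_range_add_one (a · x) =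
        max (a (k + 1) x) ((Finset.range (k + 1)).sup' Finset.nonempty_range_add_one (a · x)) := by
      simp only [Finset.range_add_one (n := k + 1)]
      exact Finset.sup'_insert _ _
    rw [hsup, max_comm, ← ih, ← max_zero_sub_add, add_sub_assoc]
    rfl

theorem icnn_approximates_lipschitz_convex_general
    (n : ℕ) (s : Set (EuclideanSpace ℝ (Fin n)))
    (hs_cpt : IsCompact s)
    (f : EuclideanSpace ℝ (Fin n) → ℝ)
    (hf_cvx : ConvexOn ℝ s f) (hf_lip : ∃ K : NNReal, LipschitzOnWith K f s)
    (ε : ℝ) (hε : 0 < ε) :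
    ∃ (k : ℕ), 1 ≤ k ∧
      ∃ (p : ℕ → EuclideanSpace ℝ (Fin n) →ᵃ[ℝ] ℝ) (q : EuclideanSpace ℝ (Fin n) →ᵃ[ℝ] ℝ),
        ∀ x ∈ s, |f x - (icnnSeq n p k x + q x)| ≤ ε := by
  obtain ⟨K, hK⟩ := hf_lip
  obtain ⟨k, a, ha_le, ha_approx⟩ := hf_cvx.exists_affine_minorants_approx hs_cpt hK.continuousOn hε
  refine ⟨k + 1, Nat.le_add_left 1 k, fun i => a (i - 1) - a i, a (k + 1), fun x hx => ?_⟩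
  rw [icnnSeq_add_eq_sup']
  set S := (Finset.range (k + 1 + 1)).sup' Finset.nonempty_range_add_one (a · x)
  obtain ⟨i, hik, hi⟩ := ha_approx x hx
  have hS_ge : a i x ≤ S := Finset.le_sup' (a · x) (Finset.mem_range.2 (by omega))
  have hS_le : S ≤ f x := Finset.sup'_le _ _ fun j _ => ha_le j x hx
  rw [abs_le]
  constructor <;> linarith

theorem icnn_approximates_lipschitz_convex
    (n : ℕ) (s : Set (EuclideanSpace ℝ (Fin n)))
    (hs_ne : s.Nonempty) (hs_cpt : IsCompact s) (hs_cvx : Convex ℝ s)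
    (f : EuclideanSpace ℝ (Fin n) → ℝ)
    (hf_cvx : ConvexOn ℝ s f) (hf_lip : ∃ K : NNReal, LipschitzOnWith K f s)
    (ε : ℝ) (hε : 0 < ε) :
    ∃ (k : ℕ), 1 ≤ k ∧
      ∃ (p : ℕ → EuclideanSpace ℝ (Fin n) →ᵃ[ℝ] ℝ) (q : EuclideanSpace ℝ (Fin n) →ᵃ[ℝ] ℝ),
        ∀ x ∈ s, |f x - (icnnSeq n p k x + q x)| ≤ ε :=
  icnn_approximates_lipschitz_convex_general n s hs_cpt f hf_cvx hf_lip ε hε
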